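/- Let N ≥ 3, μ > 0, ω > 0 and α ≠ 0. If there exist ε ∈ {-1,+1}^N and a ≥ 0 such that the N-tuple with components φ_{ω, ε_i a} satisfies the δ vertex condition of strength α, then ω > α²/N². -/

import Mathlib

open Real MeasureTheory

/-- `sech y = 1 / cosh y`. -/
noncomputable def sech (y : ℝ) : ℝ := 1 / Real.cosh y

/-- The half-line soliton profile `φ_{ω,a}(x) = [(μ+1)ω]^{1/(2μ)} sech^{1/μ}(μ√ω (x-a))`. -/
noncomputable def solProfile (μ ω a : ℝ) (x : ℝ) : ℝ :=
  ((μ + 1) * ω) ^ (1 / (2 * μ)) * sech (μ * Real.sqrt ω * (x - a)) ^ (1 / μ)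

/-!
At the vertex `φ_{ω,±a}` all take the same value `φ_{ω,a}(0) > 0`, and
`φ_{ω,εa}'(0) = ε √ω tanh(μ√ω a) φ_{ω,a}(0)`. The `δ` condition therefore reads
`α = √ω tanh(μ√ω a) ∑ εᵢ`, and `|tanh| < 1`, `|∑ εᵢ| ≤ N` give `α² < ω N²`.
-/

theorem sech_pos (y : ℝ) : 0 < sech y := one_div_pos.mpr (cosh_pos y)

theorem HasDerivAt.sech {f : ℝ → ℝ} {f' x : ℝ} (hf : HasDerivAt f f' x) :
    HasDerivAt (fun t => sech (f t)) (-(tanh (f x) * sech (f x) * f')) x := by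
  have := hf.cosh.fun_inv (cosh_pos (f x)).ne'
  simp only [← one_div] at this
  refine this.congr_deriv ?_
  simp only [_root_.sech, tanh_eq_sinh_div_cosh]
  field_simp

theorem hasDerivAt_solProfile (μ ω a x : ℝ) (hμ : μ ≠ 0) :
    HasDerivAt (solProfile μ ω a)
      (-(√ω * tanh (μ * √ω * (x - a))) * solProfile μ ω a x) x := by
  have hy : HasDerivAt (fun x => μ * √ω * (x - a)) (μ * √ω) x := by
    simpa using ((hasDerivAt_id x).sub_const a).const_mul (μ * √ω)
  refine ((hy.sech.rpow_const (p := 1 / μ) (Or.inl (sech_pos _).ne')).const_mul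
    (((μ + 1) * ω) ^ (1 / (2 * μ)))).congr_deriv ?_
  have hsech := (sech_pos (μ * √ω * (x - a))).ne'
  rw [rpow_sub_one hsech]
  simp only [solProfile]
  field_simp

theorem solProfile_neg_neg (μ ω a x : ℝ) : solProfile μ ω (-a) (-x) = solProfile μ ω a x := by
  simp only [solProfile, sech, show -x - -a = -(x - a) by ring, mul_neg, cosh_neg]

theorem solProfile_pos (μ ω a x : ℝ) (hμ : -1 < μ) (hω : 0 < ω) : 0 < solProfile μ ω a x := by
  have : 0 < (μ + 1) * ω := mul_pos (by linarith) hω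
  have := sech_pos (μ * √ω * (x - a))
  unfold solProfile
  positivity

theorem solProfile_sign_mul_zero {μ ω a ε : ℝ} (hε : ε = 1 ∨ ε = -1) :
    solProfile μ ω (ε * a) 0 = solProfile μ ω a 0 := by
  rcases hε with rfl | rfl
  · rw [one_mul]
  · simpa using solProfile_neg_neg μ ω a 0

theorem deriv_solProfile_sign_mul_zero {μ ω a ε : ℝ} (hμ : μ ≠ 0) (hε : ε = 1 ∨ ε = -1) :
    deriv (solProfile μ ω (ε * a)) 0 = ε * (√ω * tanh (μ * √ω * a) * solProfile μ ω a 0) := by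
  rw [(hasDerivAt_solProfile μ ω (ε * a) 0 hμ).deriv, solProfile_sign_mul_zero hε]
  rcases hε with rfl | rfl
  · rw [zero_sub, one_mul, mul_neg, tanh_neg]
    ring
  · ring_nf

theorem abs_sum_le_card_of_abs_le_one {ι : Type*} (s : Finset ι) {f : ι → ℝ}
    (hf : ∀ i ∈ s, |f i| ≤ 1) : |∑ i ∈ s, f i| ≤ s.card :=
  (Finset.abs_sum_le_sum_abs f s).trans (by simpa using Finset.sum_le_card_nsmul s _ 1 hf)

/-- let `N ≥ 3`, `μ > 0`, `ω > 0`, `α ≠ 0`. If some tuple of soliton profiles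
`(φ_{ω, ε_i a})_i` with `ε ∈ {-1,1}^N`, `a ≥ 0` satisfies the `δ` vertex condition of strength
`α`, then `ω > α²/N²` (lower bound on the allowed frequencies). -/
theorem frequency_lower_bound (N : ℕ) (hN : 3 ≤ N) (μ ω α : ℝ)
    (hμ : 0 < μ) (hω : 0 < ω)
    (h : ∃ (ε : Fin N → ℝ) (a : ℝ), (∀ i, ε i = 1 ∨ ε i = -1) ∧ 0 ≤ a ∧
      (∀ i j : Fin N, solProfile μ ω (ε i * a) 0 = solProfile μ ω (ε j * a) 0) ∧
      (∑ i : Fin N, deriv (solProfile μ ω (ε i * a)) 0)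
        = α * solProfile μ ω (ε ⟨0, by omega⟩ * a) 0) :
    α ^ 2 / (N : ℝ) ^ 2 < ω := by
  obtain ⟨ε, a, hε, -, -, hδ⟩ := h
  simp only [deriv_solProfile_sign_mul_zero hμ.ne' (hε _), ← Finset.sum_mul,
    solProfile_sign_mul_zero (hε _)] at hδ
  set T := tanh (μ * √ω * a)
  set S := ∑ i, ε i
  have hK := solProfile_pos μ ω a 0 (by linarith) hω
  have hα : α = √ω * T * S := mul_right_cancel₀ hK.ne' (by rw [← hδ]; ring)
  have hS : |S| ≤ N := by
    simpa using abs_sum_le_card_of_abs_le_one Finset.univ (f := ε) fun i _ => by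
      rcases hε i with h | h <;> simp [h]
  have hN2 : (0 : ℝ) < (N : ℝ) ^ 2 := by positivity
  have hTS : T ^ 2 * S ^ 2 < (N : ℝ) ^ 2 := by
    have := tanh_sq_lt_one (μ * √ω * a)
    have := sq_le_sq' (abs_le.mp hS).1 (abs_le.mp hS).2
    nlinarith [sq_nonneg T]
  rw [div_lt_iff₀ hN2, hα, mul_pow, mul_pow, sq_sqrt hω.le, mul_assoc]
  exact mul_lt_mul_of_pos_left hTS hω
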